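/- arXiv:2310.17077 — 9 statements merged into one kernel-verified Lean document; each statement's English description precedes it below -/
import Mathlib

section
/- Let A, B ⊆ R^d be closed convex cones and let T_DR = (1/2)(Id + R_B ∘ R_A) where R_C = 2P_C − Id is the reflection across C. If x = u + v with u ∈ (−B) ∩ A° and v ∈ B° ∩ A, then T_DR(x) = 0. -/
/-!
Pairing `u ∈ A°` with `v ∈ A` and `v ∈ B°` with `-u ∈ B` gives `⟪u, v⟫ ≤ 0 ≤ ⟪u, v⟫`, so the pair
`v ∈ A`, `x - v = u ∈ A°` is a Moreau decomposition of `x`, so `P_A x = v`. Then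
`R_A x = 2v - x = v - u`, and likewise `-u ∈ B`, `(v - u) - (-u) = v ∈ B°` give
`P_B (v - u) = -u`, whence `T_DR x = (x + 2(-u) - (v - u)) / 2 = 0`.
-/

section NearestPoint

variable {E : Type*} [NormedAddCommGroup E] [InnerProductSpace ℝ E]

lemma eq_of_norm_sub_le_of_inner_nonpos {C : Set E} {x p q : E} (hq : q ∈ C)
    (hvar : ∀ w ∈ C, inner ℝ (x - p) (w - p) ≤ (0 : ℝ)) (hqp : ‖x - q‖ ≤ ‖x - p‖) :
    q = p := by
  have hexpand : ‖x - q‖ ^ 2 = ‖x - p‖ ^ 2 - 2 * inner ℝ (x - p) (q - p) + ‖q - p‖ ^ 2 := by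
    rw [show x - q = (x - p) - (q - p) by abel, norm_sub_sq_real]
  have hsq : ‖x - q‖ ^ 2 ≤ ‖x - p‖ ^ 2 := pow_le_pow_left₀ (norm_nonneg _) hqp 2
  have hzero : ‖q - p‖ ^ 2 ≤ 0 := by linarith [hvar q hq]
  simpa [sub_eq_zero] using le_antisymm hzero (sq_nonneg _)

lemma nearest_eq_of_sub_mem_polar {C : Set E} (P : E → E)
    (hP : ∀ x, P x ∈ C ∧ ∀ w ∈ C, ‖x - P x‖ ≤ ‖x - w‖) {x p : E} (hp : p ∈ C)
    (hpolar : ∀ w ∈ C, inner ℝ w (x - p) ≤ (0 : ℝ)) (horth : inner ℝ (x - p) p = (0 : ℝ)) :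
    P x = p := by
  refine eq_of_norm_sub_le_of_inner_nonpos (hP x).1 (fun w hw => ?_) ((hP x).2 p hp)
  rw [inner_sub_right, horth, sub_zero, real_inner_comm]
  exact hpolar w hw

end NearestPoint

theorem stmt1_general {d : ℕ} (A B : Set (EuclideanSpace ℝ (Fin d)))
    (PA PB T : EuclideanSpace ℝ (Fin d) → EuclideanSpace ℝ (Fin d))
    (hPA : ∀ x, PA x ∈ A ∧ ∀ w ∈ A, ‖x - PA x‖ ≤ ‖x - w‖)
    (hPB : ∀ x, PB x ∈ B ∧ ∀ w ∈ B, ‖x - PB x‖ ≤ ‖x - w‖)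
    (hT : ∀ x, T x = (1 / 2 : ℝ) •
      (x + ((2 : ℝ) • PB ((2 : ℝ) • PA x - x) - ((2 : ℝ) • PA x - x))))
    (u v x : EuclideanSpace ℝ (Fin d))
    (hu : u ∈ (-B) ∩ {y | ∀ w ∈ A, inner ℝ w y ≤ (0 : ℝ)})
    (hv : v ∈ {y | ∀ w ∈ B, inner ℝ w y ≤ (0 : ℝ)} ∩ A)
    (hx : x = u + v) :
    T x = 0 := by
  obtain ⟨hnegu, huA⟩ := hu
  obtain ⟨hvB, hvA⟩ := hv
  rw [Set.mem_neg] at hnegu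
  have huv : inner ℝ u v = (0 : ℝ) := by
    have h1 : inner ℝ (-u) v ≤ (0 : ℝ) := hvB (-u) hnegu
    have h2 : inner ℝ v u ≤ (0 : ℝ) := huA v hvA
    rw [inner_neg_left] at h1
    rw [real_inner_comm] at h2
    linarith
  have hPAx : PA x = v :=
    nearest_eq_of_sub_mem_polar PA hPA hvA (by simpa [hx] using huA) (by simpa [hx] using huv)
  have hreflect : (2 : ℝ) • PA x - x - -u = v := by rw [hPAx, hx, two_smul]; abel
  have hPBy : PB ((2 : ℝ) • PA x - x) = -u :=
    nearest_eq_of_sub_mem_polar PB hPB hnegu (by rwa [hreflect])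
      (by rw [hreflect, inner_neg_right, real_inner_comm, huv, neg_zero])
  rw [hT, hPBy, hPAx, hx]
  module

/-- Let `A, B ⊆ ℝ^d` be closed convex cones, `P_A, P_B` the metric projections,
`R_C = 2 P_C - Id`, and `T_DR = (1/2)(Id + R_B ∘ R_A)`.  If `x = u + v` with
`u ∈ (-B) ∩ A°` and `v ∈ B° ∩ A`, then `T_DR x = 0`. -/
theorem stmt1 {d : ℕ} (A B : Set (EuclideanSpace ℝ (Fin d)))
    (hAclosed : IsClosed A) (hAconv : Convex ℝ A)
    (hBclosed : IsClosed B) (hBconv : Convex ℝ B)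
    (hAcone : ∀ x ∈ A, ∀ t : ℝ, 0 < t → t • x ∈ A)
    (hBcone : ∀ x ∈ B, ∀ t : ℝ, 0 < t → t • x ∈ B)
    (PA PB T : EuclideanSpace ℝ (Fin d) → EuclideanSpace ℝ (Fin d))
    (hPA : ∀ x, PA x ∈ A ∧ ∀ w ∈ A, ‖x - PA x‖ ≤ ‖x - w‖)
    (hPB : ∀ x, PB x ∈ B ∧ ∀ w ∈ B, ‖x - PB x‖ ≤ ‖x - w‖)
    (hT : ∀ x, T x = (1 / 2 : ℝ) •
      (x + ((2 : ℝ) • PB ((2 : ℝ) • PA x - x) - ((2 : ℝ) • PA x - x))))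
    (u v x : EuclideanSpace ℝ (Fin d))
    (hu : u ∈ (-B) ∩ {y | ∀ w ∈ A, inner ℝ w y ≤ (0 : ℝ)})
    (hv : v ∈ {y | ∀ w ∈ B, inner ℝ w y ≤ (0 : ℝ)} ∩ A)
    (hx : x = u + v) :
    T x = 0 :=
  stmt1_general A B PA PB T hPA hPB hT u v x hu hv hx
end

section
/- Let A, B ⊆ R^d be closed convex cones and T_DR the Douglas–Rachford operator for (A,B). The kernel {x : T_DR(x) = 0} equals the cone generated by the union of (−B) ∩ A° and B° ∩ A, i.e., it equals the set of sums u + v with u ∈ (−B) ∩ A° and v ∈ B° ∩ A. -/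
/-!
By Moreau's theorem, `p` is the nearest point of a convex cone `C` to `x` iff `p ∈ C`,
`x - p ∈ C°` and `⟪p, x - p⟫ = 0`. Since `T_DR x = 0` says exactly that `P_B (R_A x) = P_A x - x`,
put `p = P_A x` and `u = x - p`: Moreau for `A` at `x` gives `u ∈ A°`, and Moreau for `B` at
`R_A x = p - u` gives `-u ∈ B` and `p ∈ B°`. Conversely, for `u ∈ (-B) ∩ A°` and `v ∈ B° ∩ A`
the two polar inequalities force `⟪u, v⟫ = 0`, so Moreau identifies `P_A (u + v) = v` and
`P_B (v - u) = -u`, whence `T_DR (u + v) = 0`.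
-/

open scoped RealInnerProductSpace

section NearestPoint

variable {F : Type*} [NormedAddCommGroup F] {C : Set F} {x p q : F}

def IsNearestPoint (C : Set F) (x p : F) : Prop :=
  p ∈ C ∧ ∀ w ∈ C, ‖x - p‖ ≤ ‖x - w‖

theorem isNearestPoint_iff_norm_eq_iInf (hp : p ∈ C) :
    IsNearestPoint C x p ↔ ‖x - p‖ = ⨅ w : C, ‖x - w‖ := by
  have : Nonempty C := ⟨⟨p, hp⟩⟩
  have hbdd : BddBelow (Set.range fun w : C => ‖x - w‖) :=
    ⟨0, by rintro _ ⟨w, rfl⟩; exact norm_nonneg _⟩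
  refine ⟨fun h => le_antisymm (le_ciInf fun w => h.2 w w.2) (ciInf_le hbdd ⟨p, hp⟩),
    fun h => ⟨hp, fun w hw => h ▸ ciInf_le hbdd ⟨w, hw⟩⟩⟩

variable [InnerProductSpace ℝ F]

def polarCone (C : Set F) : Set F :=
  {y | ∀ w ∈ C, ⟪w, y⟫ ≤ 0}

theorem isNearestPoint_iff_inner_sub_nonpos (hC : Convex ℝ C) :
    IsNearestPoint C x p ↔ p ∈ C ∧ ∀ w ∈ C, ⟪x - p, w - p⟫ ≤ 0 := by
  refine ⟨fun h => ⟨h.1, ?_⟩, fun ⟨hp, h⟩ => ?_⟩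
  · exact (norm_eq_iInf_iff_real_inner_le_zero hC h.1).1
      ((isNearestPoint_iff_norm_eq_iInf h.1).1 h)
  · exact (isNearestPoint_iff_norm_eq_iInf hp).2
      ((norm_eq_iInf_iff_real_inner_le_zero hC hp).2 h)

theorem IsNearestPoint.unique (hC : Convex ℝ C) (hp : IsNearestPoint C x p)
    (hq : IsNearestPoint C x q) : p = q := by
  rw [isNearestPoint_iff_inner_sub_nonpos hC] at hp hq
  have hpq : ⟪x - p, q - p⟫ ≤ 0 := hp.2 q hq.1
  have hqp : ⟪x - q, p - q⟫ ≤ 0 := hq.2 p hp.1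
  have hsum : ⟪q - p, q - p⟫ = ⟪x - p, q - p⟫ + ⟪x - q, p - q⟫ := by
    rw [← neg_sub q p, inner_neg_right, ← sub_eq_add_neg, ← inner_sub_left]
    congr 1; abel
  exact (sub_eq_zero.mp (real_inner_self_nonpos.mp (by linarith))).symm

theorem isNearestPoint_iff_of_cone (hC : Convex ℝ C)
    (hcone : ∀ x ∈ C, ∀ t : ℝ, 0 < t → t • x ∈ C) :
    IsNearestPoint C x p ↔ p ∈ C ∧ ⟪p, x - p⟫ = 0 ∧ x - p ∈ polarCone C := by
  rw [isNearestPoint_iff_inner_sub_nonpos hC]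
  refine ⟨fun ⟨hp, h⟩ => ⟨hp, ?_⟩, fun ⟨hp, horth, hpolar⟩ => ⟨hp, fun w hw => ?_⟩⟩
  · -- test the variational inequality against `2 • p` and `p / 2`
    have h2 := h ((2 : ℝ) • p) (hcone p hp 2 two_pos)
    have hhalf := h ((1 / 2 : ℝ) • p) (hcone p hp _ one_half_pos)
    rw [show (2 : ℝ) • p - p = p by module] at h2
    rw [show (1 / 2 : ℝ) • p - p = -((1 / 2 : ℝ) • p) by module, inner_neg_right,
      real_inner_smul_right] at hhalf
    have horth : ⟪p, x - p⟫ = 0 := by rw [real_inner_comm]; linarith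
    refine ⟨horth, fun w hw => ?_⟩
    have := h w hw
    rwa [inner_sub_right, real_inner_comm p, horth, sub_zero, real_inner_comm] at this
  · rw [inner_sub_right, real_inner_comm p, horth, sub_zero, real_inner_comm]
    exact hpolar w hw

end NearestPoint

section DouglasRachford

variable {F : Type*} [AddCommGroup F] [Module ℝ F]

def reflection (P : F → F) (x : F) : F :=
  (2 : ℝ) • P x - x

noncomputable def douglasRachford (PA PB : F → F) (x : F) : F :=
  (1 / 2 : ℝ) • (x + reflection PB (reflection PA x))

theorem douglasRachford_eq_zero_iff {PA PB : F → F} {x : F} :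
    douglasRachford PA PB x = 0 ↔ PB (reflection PA x) = PA x - x := by
  have h : douglasRachford PA PB x = PB (reflection PA x) - (PA x - x) := by
    unfold douglasRachford reflection; module
  rw [h, sub_eq_zero]

end DouglasRachford

section ConeDecomposition

variable {F : Type*} [NormedAddCommGroup F] [InnerProductSpace ℝ F] {A B : Set F} {u v x p : F}

theorem inner_eq_zero_of_mem_polarCone (hu : u ∈ -B ∩ polarCone A) (hv : v ∈ polarCone B ∩ A) :
    ⟪v, u⟫ = 0 := by
  have h₁ : ⟪v, u⟫ ≤ 0 := hu.2 v hv.2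
  have h₂ : ⟪-u, v⟫ ≤ 0 := hv.1 (-u) hu.1
  rw [inner_neg_left, real_inner_comm] at h₂
  linarith

variable (hA : Convex ℝ A) (hAcone : ∀ x ∈ A, ∀ t : ℝ, 0 < t → t • x ∈ A)
  (hB : Convex ℝ B) (hBcone : ∀ x ∈ B, ∀ t : ℝ, 0 < t → t • x ∈ B)
include hA hAcone hB hBcone

theorem mem_polarCone_of_isNearestPoint_reflection (hp : IsNearestPoint A x p)
    (hq : IsNearestPoint B ((2 : ℝ) • p - x) (p - x)) :
    x - p ∈ -B ∩ polarCone A ∧ p ∈ polarCone B ∩ A := by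
  obtain ⟨hpA, -, hxp⟩ := (isNearestPoint_iff_of_cone hA hAcone).1 hp
  obtain ⟨hpxB, -, hp'⟩ := (isNearestPoint_iff_of_cone hB hBcone).1 hq
  rw [show (2 : ℝ) • p - x - (p - x) = p by module] at hp'
  exact ⟨⟨by simpa using hpxB, hxp⟩, hp', hpA⟩

theorem isNearestPoint_of_mem_polarCone (hu : u ∈ -B ∩ polarCone A)
    (hv : v ∈ polarCone B ∩ A) :
    IsNearestPoint A (u + v) v ∧ IsNearestPoint B (v - u) (-u) := by
  have horth := inner_eq_zero_of_mem_polarCone hu hv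
  refine ⟨(isNearestPoint_iff_of_cone hA hAcone).2 ⟨hv.2, ?_, ?_⟩,
    (isNearestPoint_iff_of_cone hB hBcone).2 ⟨hu.1, ?_, ?_⟩⟩
  · rwa [add_sub_cancel_right]
  · simpa using hu.2
  · rw [sub_neg_eq_add, sub_add_cancel, inner_neg_left, real_inner_comm, horth, neg_zero]
  · simpa using hv.1

end ConeDecomposition

theorem stmt2_general {d : ℕ} (A B : Set (EuclideanSpace ℝ (Fin d)))
    (hAconv : Convex ℝ A)
    (hBconv : Convex ℝ B)
    (hAcone : ∀ x ∈ A, ∀ t : ℝ, 0 < t → t • x ∈ A)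
    (hBcone : ∀ x ∈ B, ∀ t : ℝ, 0 < t → t • x ∈ B)
    (PA PB T : EuclideanSpace ℝ (Fin d) → EuclideanSpace ℝ (Fin d))
    (hPA : ∀ x, PA x ∈ A ∧ ∀ w ∈ A, ‖x - PA x‖ ≤ ‖x - w‖)
    (hPB : ∀ x, PB x ∈ B ∧ ∀ w ∈ B, ‖x - PB x‖ ≤ ‖x - w‖)
    (hT : ∀ x, T x = (1 / 2 : ℝ) •
      (x + ((2 : ℝ) • PB ((2 : ℝ) • PA x - x) - ((2 : ℝ) • PA x - x)))) :
    {x | T x = 0} =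
      {x | ∃ u ∈ (-B) ∩ {y | ∀ w ∈ A, inner ℝ w y ≤ (0 : ℝ)},
        ∃ v ∈ {y | ∀ w ∈ B, inner ℝ w y ≤ (0 : ℝ)} ∩ A, x = u + v} := by
  have hT : T = douglasRachford PA PB := funext hT
  ext x
  simp only [Set.mem_ofPred_eq, hT, douglasRachford_eq_zero_iff]
  constructor
  · intro hfix
    obtain ⟨hu, hv⟩ := mem_polarCone_of_isNearestPoint_reflection hAconv hAcone hBconv hBcone
      (hPA x) (hfix ▸ hPB (reflection PA x))
    exact ⟨x - PA x, hu, PA x, hv, (sub_add_cancel x _).symm⟩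
  · rintro ⟨u, hu, v, hv, rfl⟩
    obtain ⟨hnearA, hnearB⟩ := isNearestPoint_of_mem_polarCone hAconv hAcone hBconv hBcone hu hv
    have hPAuv : PA (u + v) = v := IsNearestPoint.unique hAconv (hPA _) hnearA
    have hrefl : reflection PA (u + v) = v - u := by rw [reflection, hPAuv]; module
    rw [hrefl, IsNearestPoint.unique hBconv (hPB _) hnearB, hPAuv]
    abel

/-- For closed convex cones `A, B ⊆ ℝ^d`, the kernel of the Douglas–Rachford operator
equals the cone generated by `((-B) ∩ A°) ∪ (B° ∩ A)`, i.e. the set of sums `u + v`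
with `u ∈ (-B) ∩ A°` and `v ∈ B° ∩ A`. -/
theorem stmt2 {d : ℕ} (A B : Set (EuclideanSpace ℝ (Fin d)))
    (hAclosed : IsClosed A) (hAconv : Convex ℝ A)
    (hBclosed : IsClosed B) (hBconv : Convex ℝ B)
    (hAcone : ∀ x ∈ A, ∀ t : ℝ, 0 < t → t • x ∈ A)
    (hBcone : ∀ x ∈ B, ∀ t : ℝ, 0 < t → t • x ∈ B)
    (PA PB T : EuclideanSpace ℝ (Fin d) → EuclideanSpace ℝ (Fin d))
    (hPA : ∀ x, PA x ∈ A ∧ ∀ w ∈ A, ‖x - PA x‖ ≤ ‖x - w‖)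
    (hPB : ∀ x, PB x ∈ B ∧ ∀ w ∈ B, ‖x - PB x‖ ≤ ‖x - w‖)
    (hT : ∀ x, T x = (1 / 2 : ℝ) •
      (x + ((2 : ℝ) • PB ((2 : ℝ) • PA x - x) - ((2 : ℝ) • PA x - x)))) :
    {x | T x = 0} =
      {x | ∃ u ∈ (-B) ∩ {y | ∀ w ∈ A, inner ℝ w y ≤ (0 : ℝ)},
        ∃ v ∈ {y | ∀ w ∈ B, inner ℝ w y ≤ (0 : ℝ)} ∩ A, x = u + v} :=
  stmt2_general A B hAconv hBconv hAcone hBcone PA PB T hPA hPB hT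
end

section
/- Let A, B ⊆ R^d be closed convex cones and T_DR the Douglas–Rachford operator for (A,B). Then the image of T_DR intersects the kernel of T_DR only in the origin: if y = T_DR(x) for some x and T_DR(y) = 0, then y = 0. -/
local notation "⟪" x ", " y "⟫_ℝ" => @inner ℝ _ _ x y

section Aux
variable {E : Type*} [NormedAddCommGroup E] [InnerProductSpace ℝ E]

/-- Variational inequality for a minimizing projection. -/
lemma drAux_vi {K : Set E} (hK : Convex ℝ K) {P : E → E}
    (hP : ∀ x, P x ∈ K ∧ ∀ w ∈ K, ‖x - P x‖ ≤ ‖x - w‖) (u : E) :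
    ∀ w ∈ K, ⟪u - P u, w - P u⟫_ℝ ≤ 0 := by
  haveI : Nonempty K := ⟨⟨P u, (hP u).1⟩⟩
  refine (norm_eq_iInf_iff_real_inner_le_zero hK (hP u).1).mp ?_
  refine le_antisymm (le_ciInf fun w => (hP u).2 w w.2) ?_
  exact ciInf_le ⟨0, fun _ ⟨w, h⟩ => h ▸ norm_nonneg _⟩ (⟨P u, (hP u).1⟩ : K)

/-- Uniqueness: a point of K satisfying the VI equals the projection. -/
lemma drAux_unique {K : Set E} (hK : Convex ℝ K) {P : E → E}
    (hP : ∀ x, P x ∈ K ∧ ∀ w ∈ K, ‖x - P x‖ ≤ ‖x - w‖) (u p : E) (hp : p ∈ K)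
    (hvi : ∀ w ∈ K, ⟪u - p, w - p⟫_ℝ ≤ 0) : P u = p := by
  have h1 := drAux_vi hK hP u p hp
  have h2 := hvi (P u) (hP u).1
  have key : ⟪p - P u, p - P u⟫_ℝ = ⟪u - P u, p - P u⟫_ℝ - ⟪u - p, p - P u⟫_ℝ := by
    rw [← inner_sub_left]; congr 1; abel
  have h2' : ⟪u - p, p - P u⟫_ℝ = -⟪u - p, P u - p⟫_ℝ := by
    rw [← inner_neg_right]; congr 1; abel
  have hle : ⟪p - P u, p - P u⟫_ℝ ≤ 0 := by rw [key, h2']; linarith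
  have hz : p - P u = 0 :=
    inner_self_eq_zero.mp (le_antisymm hle real_inner_self_nonneg)
  have : p = P u := by rwa [sub_eq_zero] at hz
  exact this.symm

/-- Firm nonexpansiveness of projections. -/
lemma drAux_firm {K : Set E} (hK : Convex ℝ K) {P : E → E}
    (hP : ∀ x, P x ∈ K ∧ ∀ w ∈ K, ‖x - P x‖ ≤ ‖x - w‖) (u v : E) :
    ‖P u - P v‖ ^ 2 ≤ ⟪u - v, P u - P v⟫_ℝ := by
  have h1 := drAux_vi hK hP u (P v) (hP v).1
  have h2 := drAux_vi hK hP v (P u) (hP u).1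
  have e : ⟪P u - P v, P u - P v⟫_ℝ = ‖P u - P v‖ ^ 2 := real_inner_self_eq_norm_sq _
  have k1 : ⟪u - P u, P v - P u⟫_ℝ = -⟪u - P u, P u - P v⟫_ℝ := by
    rw [← inner_neg_right]; congr 1; abel
  have k2 : ⟪(u - v) - (P u - P v), P u - P v⟫_ℝ
      = ⟪u - P u, P u - P v⟫_ℝ - ⟪v - P v, P u - P v⟫_ℝ := by
    rw [← inner_sub_left]; congr 1; abel
  have k3 : ⟪(u - v) - (P u - P v), P u - P v⟫_ℝ
      = ⟪u - v, P u - P v⟫_ℝ - ⟪P u - P v, P u - P v⟫_ℝ := inner_sub_left _ _ _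
  linarith

/-- Nonexpansiveness of reflection. -/
lemma drAux_refl {K : Set E} (hK : Convex ℝ K) {P : E → E}
    (hP : ∀ x, P x ∈ K ∧ ∀ w ∈ K, ‖x - P x‖ ≤ ‖x - w‖) (u v : E) :
    ‖((2:ℝ) • P u - u) - ((2:ℝ) • P v - v)‖ ≤ ‖u - v‖ := by
  have hf := drAux_firm hK hP u v
  have e : ((2:ℝ) • P u - u) - ((2:ℝ) • P v - v) = (2:ℝ) • (P u - P v) - (u - v) := by
    module
  rw [e]
  have hsq : ‖(2:ℝ) • (P u - P v) - (u - v)‖ ^ 2 ≤ ‖u - v‖ ^ 2 := by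
    rw [norm_sub_sq_real, norm_smul, real_inner_smul_left]
    simp only [Real.norm_ofNat]
    nlinarith [hf, real_inner_comm (u - v) (P u - P v)]
  exact (pow_le_pow_iff_left₀ (norm_nonneg _) (norm_nonneg _) two_ne_zero).mp hsq
end Aux
set_option maxHeartbeats 1000000 in
/-- For closed convex cones `A, B ⊆ ℝ^d` and the Douglas–Rachford operator `T_DR`,
the image of `T_DR` meets the kernel of `T_DR` only at the origin: if `y = T_DR x`
and `T_DR y = 0`, then `y = 0`. -/
theorem stmt6 {d : ℕ} (A B : Set (EuclideanSpace ℝ (Fin d)))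
    (hAclosed : IsClosed A) (hAconv : Convex ℝ A)
    (hBclosed : IsClosed B) (hBconv : Convex ℝ B)
    (hAcone : ∀ x ∈ A, ∀ t : ℝ, 0 < t → t • x ∈ A)
    (hBcone : ∀ x ∈ B, ∀ t : ℝ, 0 < t → t • x ∈ B)
    (PA PB T : EuclideanSpace ℝ (Fin d) → EuclideanSpace ℝ (Fin d))
    (hPA : ∀ x, PA x ∈ A ∧ ∀ w ∈ A, ‖x - PA x‖ ≤ ‖x - w‖)
    (hPB : ∀ x, PB x ∈ B ∧ ∀ w ∈ B, ‖x - PB x‖ ≤ ‖x - w‖)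
    (hT : ∀ x, T x = (1 / 2 : ℝ) •
      (x + ((2 : ℝ) • PB ((2 : ℝ) • PA x - x) - ((2 : ℝ) • PA x - x))))
    (x y : EuclideanSpace ℝ (Fin d)) (hy : y = T x) (hy0 : T y = 0) :
    y = 0 := by
  -- positive homogeneity of projections onto cones
  have hom : ∀ (K : Set (EuclideanSpace ℝ (Fin d))), Convex ℝ K →
      (∀ x ∈ K, ∀ t : ℝ, 0 < t → t • x ∈ K) →
      ∀ (P : EuclideanSpace ℝ (Fin d) → EuclideanSpace ℝ (Fin d)),
      (∀ x, P x ∈ K ∧ ∀ w ∈ K, ‖x - P x‖ ≤ ‖x - w‖) →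
      ∀ (z : EuclideanSpace ℝ (Fin d)) (t : ℝ), 0 < t → P (t • z) = t • P z := by
    intro K hK hKcone P hP z t ht
    refine drAux_unique hK hP (t • z) (t • P z) (hKcone _ (hP z).1 t ht) ?_
    intro w hw
    have hw' : t⁻¹ • w ∈ K := hKcone w hw t⁻¹ (by positivity)
    have e1 : t • z - t • P z = t • (z - P z) := by module
    have e2 : w - t • P z = t • (t⁻¹ • w - P z) := by
      rw [smul_sub, smul_inv_smul₀ ht.ne']
    rw [e1, e2, real_inner_smul_left, real_inner_smul_right]
    have hvi := drAux_vi hK hP z (t⁻¹ • w) hw'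
    have : t * (t * ⟪z - P z, t⁻¹ • w - P z⟫_ℝ) = (t * t) * ⟪z - P z, t⁻¹ • w - P z⟫_ℝ := by
      ring
    rw [this]
    exact mul_nonpos_of_nonneg_of_nonpos (by positivity) hvi
  have hPAh := hom A hAconv hAcone PA hPA
  have hPBh := hom B hBconv hBcone PB hPB
  -- positive homogeneity of T
  have hTh : ∀ (z : EuclideanSpace ℝ (Fin d)) (t : ℝ), 0 < t → T (t • z) = t • T z := by
    intro z t ht
    rw [hT, hT, hPAh z t ht]
    have e : (2:ℝ) • (t • PA z) - t • z = t • ((2:ℝ) • PA z - z) := by module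
    rw [e, hPBh _ t ht]
    module
  -- firm nonexpansiveness of T
  have firmT : ∀ u v : EuclideanSpace ℝ (Fin d),
      ‖T u - T v‖ ^ 2 ≤ ⟪u - v, T u - T v⟫_ℝ := by
    intro u v
    set a := u - v with ha
    set b := ((2:ℝ) • PB ((2:ℝ) • PA u - u) - ((2:ℝ) • PA u - u)) -
      ((2:ℝ) • PB ((2:ℝ) • PA v - v) - ((2:ℝ) • PA v - v)) with hb
    have hTuv : T u - T v = (1/2 : ℝ) • (a + b) := by
      rw [hT, hT]; module
    have hba : ‖b‖ ≤ ‖a‖ := by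
      calc ‖b‖ ≤ ‖((2:ℝ) • PA u - u) - ((2:ℝ) • PA v - v)‖ :=
            drAux_refl hBconv hPB _ _
        _ ≤ ‖a‖ := drAux_refl hAconv hPA u v
    rw [hTuv]
    have h1 : ‖(1/2 : ℝ) • (a + b)‖ ^ 2 = (1/4) * ‖a + b‖ ^ 2 := by
      rw [norm_smul]; simp; ring
    have h2 : ‖a + b‖ ^ 2 = ‖a‖ ^ 2 + 2 * ⟪a, b⟫_ℝ + ‖b‖ ^ 2 := norm_add_sq_real a b
    have h3 : ⟪a, (1/2 : ℝ) • (a + b)⟫_ℝ = (1/2) * (‖a‖ ^ 2 + ⟪a, b⟫_ℝ) := by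
      rw [real_inner_smul_right, inner_add_right, real_inner_self_eq_norm_sq]
    rw [h1, h2, h3]
    nlinarith [hba, norm_nonneg a, norm_nonneg b]
  -- main argument: apply firm nonexpansiveness to (t • x, y) for all t > 0
  by_contra hne
  have hn : (0:ℝ) < ‖y‖ ^ 2 := pow_pos (norm_pos_iff.mpr hne) 2
  set n := ‖y‖ ^ 2 with hndef
  set c := ⟪x, y⟫_ℝ with hcdef
  have key : ∀ t : ℝ, 0 < t → t^2 * n + t * n ≤ t^2 * c := by
    intro t ht
    have h := firmT (t • x) y
    rw [hTh x t ht, ← hy, hy0, sub_zero] at h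
    have e1 : ‖t • y‖ ^ 2 = t^2 * n := by
      simp only [hndef]
      rw [norm_smul, mul_pow, Real.norm_eq_abs, sq_abs]
    have e2 : ⟪t • x - y, t • y⟫_ℝ = t^2 * c - t * n := by
      simp only [hcdef, hndef]
      rw [inner_sub_left, real_inner_smul_left, real_inner_smul_right,
        real_inner_smul_right, real_inner_self_eq_norm_sq]
      ring
    rw [e1, e2] at h
    linarith
  set t : ℝ := n / (|c| + n + 1) with htdef
  have hden : (0:ℝ) < |c| + n + 1 := by positivity
  have ht : 0 < t := div_pos hn hden
  have h1 := key t ht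
  have h2 : t * n + n ≤ t * c := by nlinarith [h1, ht]
  have h3 : t * c ≤ t * (|c| + n + 1) := by
    have : c ≤ |c| + n + 1 := by
      have := le_abs_self c; linarith
    nlinarith [ht, this]
  have h4 : t * (|c| + n + 1) = n := by
    rw [htdef]; exact div_mul_cancel₀ n hden.ne'
  nlinarith [h2, h3, h4, ht, hn]
end

section
/- Let T: R^d → R^d be a firmly nonexpansive positively homogeneous map. If y is in the image of T and T(y) = 0 and y ≠ 0, then a contradiction arises; equivalently, T(R^d) ∩ Ker T = {0} whenever 0 ∈ Ker T. -/
/-!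
If `y = T x` lies in `Ker T`, then by positive homogeneity the whole ray `s • y` (`s > 0`) does too.
Firm nonexpansiveness between `x` and `s • y` gives `(1 + s) ‖y‖² ≤ ⟪x, y⟫` for every `s > 0`,
which forces `y = 0`.
-/

open scoped RealInnerProductSpace

variable {E : Type*} [NormedAddCommGroup E] [InnerProductSpace ℝ E] {T : E → E}

theorem map_zero_of_posHomogeneous (hhom : ∀ x, ∀ t : ℝ, 0 < t → T (t • x) = t • T x) :
    T 0 = 0 := by
  have h := hhom 0 2 two_pos
  rw [smul_zero, two_smul, left_eq_add] at h
  exact h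

theorem one_add_mul_norm_sq_le_inner (hfne : ∀ x y, ‖T x - T y‖ ^ 2 ≤ ⟪x - y, T x - T y⟫)
    (hhom : ∀ x, ∀ t : ℝ, 0 < t → T (t • x) = t • T x) {x : E} (hker : T (T x) = 0)
    {s : ℝ} (hs : 0 < s) : (1 + s) * ‖T x‖ ^ 2 ≤ ⟪x, T x⟫ := by
  have hray : T (s • T x) = 0 := by rw [hhom _ s hs, hker, smul_zero]
  have h := hfne x (s • T x)
  rw [hray, sub_zero, inner_sub_left, real_inner_smul_left, real_inner_self_eq_norm_sq] at h
  linarith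

theorem map_eq_zero_of_map_map_eq_zero (hfne : ∀ x y, ‖T x - T y‖ ^ 2 ≤ ⟪x - y, T x - T y⟫)
    (hhom : ∀ x, ∀ t : ℝ, 0 < t → T (t • x) = t • T x) {x : E} (hker : T (T x) = 0) :
    T x = 0 := by
  by_contra hne
  have hpos : 0 < ‖T x‖ ^ 2 := by positivity
  set b := ⟪x, T x⟫
  have h := one_add_mul_norm_sq_le_inner hfne hhom hker
    (s := (|b| + 1) / ‖T x‖ ^ 2) (by positivity)
  rw [add_mul, one_mul, div_mul_cancel₀ _ hpos.ne'] at h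
  linarith [le_abs_self b]

theorem stmt7_general {d : ℕ} (T : EuclideanSpace ℝ (Fin d) → EuclideanSpace ℝ (Fin d))
    (hfne : ∀ x y, ‖T x - T y‖ ^ 2 ≤ inner ℝ (x - y) (T x - T y))
    (hhom : ∀ x, ∀ t : ℝ, 0 < t → T (t • x) = t • T x) :
    Set.range T ∩ {x | T x = 0} = {0} := by
  have hT0 : T 0 = 0 := map_zero_of_posHomogeneous hhom
  ext y
  constructor
  · rintro ⟨⟨x, rfl⟩, hker⟩
    exact map_eq_zero_of_map_map_eq_zero hfne hhom hker
  · rintro rfl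
    exact ⟨⟨0, hT0⟩, hT0⟩

/-- Let `T : ℝ^d → ℝ^d` be firmly nonexpansive and positively homogeneous.  If
`0 ∈ Ker T`, then the image of `T` meets `Ker T` only at the origin:
`T(ℝ^d) ∩ Ker T = {0}`. -/
theorem stmt7 {d : ℕ} (T : EuclideanSpace ℝ (Fin d) → EuclideanSpace ℝ (Fin d))
    (hfne : ∀ x y, ‖T x - T y‖ ^ 2 ≤ inner ℝ (x - y) (T x - T y))
    (hhom : ∀ x, ∀ t : ℝ, 0 < t → T (t • x) = t • T x)
    (h0 : T 0 = 0) :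
    Set.range T ∩ {x | T x = 0} = {0} :=
  stmt7_general T hfne hhom
end

section
/- Let A = {(x,y) ∈ R² : y ≥ 0} (the upper half-plane) and B = {(0,t) : t ≥ 0}. For λ, μ ∈ (0,2], κ ≥ 1/2 with κμ ≠ 1, and T = (1−κ)Id + κ P_B^μ ∘ P_A^λ, the iterates from x₀ = (d₀, y) with d₀ ≠ 0, y > 0 satisfy T^n(x₀) = ((1−κμ)^n d₀, y) ≠ T(T^n(x₀)); in particular T^n(x₀) ∉ Fix T for every n ∈ N. -/
/-- Example 2: `A = {(x,y) : y ≥ 0}` (upper half-plane), `B = {(0,t) : t ≥ 0}`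
(nonnegative vertical ray), `λ, μ ∈ (0,2]`, `κ ≥ 1/2` with `κμ ≠ 1`, and
`T = (1-κ)Id + κ P_B^μ ∘ P_A^λ`.  For `x₀ = (d₀, y)` with `d₀ ≠ 0`, `y > 0`, the
iterates satisfy `T^n x₀ = ((1-κμ)^n d₀, y)` and `T^n x₀ ∉ Fix T` for every `n`. -/
theorem stmt11 (A B : Set (EuclideanSpace ℝ (Fin 2)))
    (hA : A = {p | 0 ≤ p 1})
    (hB : B = {p | p 0 = 0 ∧ 0 ≤ p 1})
    (lam mu kappa : ℝ) (hlam : lam ∈ Set.Ioc (0 : ℝ) 2) (hmu : mu ∈ Set.Ioc (0 : ℝ) 2)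
    (hkappa : 1 / 2 ≤ kappa) (hkmu : kappa * mu ≠ 1)
    (PA PB T : EuclideanSpace ℝ (Fin 2) → EuclideanSpace ℝ (Fin 2))
    (hPA : ∀ x, PA x ∈ A ∧ ∀ w ∈ A, ‖x - PA x‖ ≤ ‖x - w‖)
    (hPB : ∀ x, PB x ∈ B ∧ ∀ w ∈ B, ‖x - PB x‖ ≤ ‖x - w‖)
    (hT : ∀ x, T x = (1 - kappa) • x +
      kappa • ((1 - mu) • ((1 - lam) • x + lam • PA x) +
        mu • PB ((1 - lam) • x + lam • PA x)))
    (d₀ y : ℝ) (hd₀ : d₀ ≠ 0) (hy : 0 < y)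
    (x₀ : EuclideanSpace ℝ (Fin 2)) (hx₀0 : x₀ 0 = d₀) (hx₀1 : x₀ 1 = y) :
    ∀ n : ℕ, (T^[n] x₀) 0 = (1 - kappa * mu) ^ n * d₀ ∧ (T^[n] x₀) 1 = y ∧
      T (T^[n] x₀) ≠ T^[n] x₀ := by
  obtain ⟨hm0, hm2⟩ := hmu
  have hk0 : 0 < kappa := lt_of_lt_of_le (by norm_num) hkappa
  set c : ℝ := 1 - kappa * mu with hc
  have hkmu0 : kappa * mu ≠ 0 := ne_of_gt (mul_pos hk0 hm0)
  have hc1 : c ≠ 1 := by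
    intro h; apply hkmu0; linarith [h]
  have hc0 : c ≠ 0 := sub_ne_zero.mpr (Ne.symm hkmu)
  have key : ∀ x : EuclideanSpace ℝ (Fin 2), 0 < x 1 →
      (T x) 0 = c * x 0 ∧ (T x) 1 = x 1 := by
    intro x hx1
    have hxA : x ∈ A := by rw [hA]; exact le_of_lt hx1
    have hPAx : PA x = x := by
      have h : ‖x - PA x‖ ≤ 0 := by simpa using (hPA x).2 x hxA
      have := norm_eq_zero.mp (le_antisymm h (norm_nonneg _))
      have := sub_eq_zero.mp this
      exact this.symm
    have hz : (1 - lam) • x + lam • PA x = x := by rw [hPAx]; module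
    set w : EuclideanSpace ℝ (Fin 2) := (WithLp.equiv 2 (Fin 2 → ℝ)).symm ![0, x 1] with hw
    have hw0 : w 0 = 0 := rfl
    have hw1 : w 1 = x 1 := rfl
    have hwB : w ∈ B := by rw [hB]; exact ⟨hw0, by rw [hw1]; exact le_of_lt hx1⟩
    obtain ⟨hPBmem, hPBmin⟩ := hPB x
    rw [hB] at hPBmem
    obtain ⟨hb0, hb1⟩ := hPBmem
    have hle := hPBmin _ hwB
    have hsq : ‖x - PB x‖ ^ 2 ≤ ‖x - w‖ ^ 2 :=
      pow_le_pow_left₀ (norm_nonneg _) hle 2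
    have hn1 : ‖x - PB x‖ ^ 2 = (x 0) ^ 2 + (x 1 - PB x 1) ^ 2 := by
      rw [EuclideanSpace.norm_eq, Real.sq_sqrt (by positivity)]
      simp [Fin.sum_univ_two, PiLp.sub_apply, Real.norm_eq_abs, sq_abs, hb0]
    have hn2 : ‖x - w‖ ^ 2 = (x 0) ^ 2 := by
      rw [EuclideanSpace.norm_eq, Real.sq_sqrt (by positivity)]
      simp [Fin.sum_univ_two, PiLp.sub_apply, Real.norm_eq_abs, sq_abs, hw0, hw1]
    have hPB1 : PB x 1 = x 1 := by nlinarith [hsq, hn1, hn2, sq_nonneg (x 1 - PB x 1)]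
    constructor
    · rw [hT x, hz]
      simp only [PiLp.add_apply, PiLp.smul_apply, smul_eq_mul, hb0]
      ring
    · rw [hT x, hz]
      simp only [PiLp.add_apply, PiLp.smul_apply, smul_eq_mul, hPB1]
      ring
  have main : ∀ n, (T^[n] x₀) 0 = c ^ n * d₀ ∧ (T^[n] x₀) 1 = y := by
    intro n
    induction n with
    | zero => simpa using ⟨hx₀0, hx₀1⟩
    | succ n ih =>
      rw [Function.iterate_succ_apply']
      have hk := key (T^[n] x₀) (by rw [ih.2]; exact hy)
      exact ⟨by rw [hk.1, ih.1]; ring, by rw [hk.2, ih.2]⟩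
  intro n
  refine ⟨(main n).1, (main n).2, ?_⟩
  intro h
  have h0 : T (T^[n] x₀) 0 = (T^[n] x₀) 0 := by rw [h]
  rw [(key _ (by rw [(main n).2]; exact hy)).1, (main n).1] at h0
  have hne : c ^ n * d₀ ≠ 0 := mul_ne_zero (pow_ne_zero n hc0) hd₀
  exact hc1 (mul_right_cancel₀ hne (by rw [one_mul]; exact h0))
end

section
/- Let A = {(ρ,θ) : π/2 ≤ θ ≤ 3π/2} (left half-plane) and B = {(ρ,θ) : −π/2 ≤ θ ≤ π/2} (right half-plane) in R², and let t ∈ (1/2, 1), with T = (1−t)Id + t P_B^{1/t} ∘ P_A^{1/t} where P_C^s = (1−s)Id + sP_C. For x₀ = (d₀, y) with d₀ > 0, y > 0, one has T^n(x₀) = ((1/t − 1)^n d₀, y) for all n; hence T^n(x₀) never lies in Fix T = A ∩ B (the y-axis) but converges to (0, y). -/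
private lemma norm_sub_eq2 (x v : EuclideanSpace ℝ (Fin 2)) :
    ‖x - v‖ = Real.sqrt ((x 0 - v 0)^2 + (x 1 - v 1)^2) := by
  rw [← dist_eq_norm, EuclideanSpace.dist_eq, Fin.sum_univ_two]
  simp [Real.dist_eq, sq_abs]

private lemma projA_coord (A : Set (EuclideanSpace ℝ (Fin 2)))
    (hA : A = {p | p 0 ≤ 0})
    (PA : EuclideanSpace ℝ (Fin 2) → EuclideanSpace ℝ (Fin 2))
    (hPA : ∀ x, PA x ∈ A ∧ ∀ w ∈ A, ‖x - PA x‖ ≤ ‖x - w‖)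
    (x : EuclideanSpace ℝ (Fin 2)) :
    (PA x) 0 = min (x 0) 0 ∧ (PA x) 1 = x 1 := by
  obtain ⟨hmem, hmin⟩ := hPA x
  set v := PA x with hv
  have hv0 : v 0 ≤ 0 := by rw [hA] at hmem; exact hmem
  set w : EuclideanSpace ℝ (Fin 2) :=
    (WithLp.equiv 2 (Fin 2 → ℝ)).symm ![min (x 0) 0, x 1] with hw
  have hw0 : w 0 = min (x 0) 0 := by simp [hw]
  have hw1 : w 1 = x 1 := by simp [hw]
  have hwA : w ∈ A := by rw [hA]; simpa [hw0] using min_le_right (x 0) 0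
  have hle := hmin w hwA
  rw [norm_sub_eq2, norm_sub_eq2, hw0, hw1, sub_self] at hle
  have hkey : (x 0 - v 0)^2 + (x 1 - v 1)^2 ≤ (x 0 - min (x 0) 0)^2 := by
    have h1 : (0:ℝ) ≤ (x 0 - v 0)^2 + (x 1 - v 1)^2 := by positivity
    have h2 : (0:ℝ) ≤ (x 0 - min (x 0) 0)^2 + 0^2 := by positivity
    simpa using (Real.sqrt_le_sqrt_iff h2).mp hle
  have h2 : (x 0 - min (x 0) 0)^2 ≤ (x 0 - v 0)^2 := by
    rcases le_or_gt (x 0) 0 with h | h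
    · rw [min_eq_left h]; simpa using sq_nonneg (x 0 - v 0)
    · rw [min_eq_right h.le]; nlinarith
  have hv1 : v 1 = x 1 := by
    have h4 : (x 1 - v 1)^2 ≤ 0 := by linarith
    have h5 : (x 1 - v 1)^2 = 0 := le_antisymm h4 (sq_nonneg _)
    have := pow_eq_zero_iff (n := 2) (by norm_num) |>.mp h5
    linarith [sub_eq_zero.mp this]
  constructor
  · rcases le_or_gt (x 0) 0 with h | h
    · rw [min_eq_left h]
      have h5 : (x 0 - v 0)^2 ≤ 0 := by rw [min_eq_left h] at hkey; nlinarith [sq_nonneg (x 1 - v 1)]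
      have h6 : (x 0 - v 0)^2 = 0 := le_antisymm h5 (sq_nonneg _)
      have := pow_eq_zero_iff (n := 2) (by norm_num) |>.mp h6
      linarith [sub_eq_zero.mp this]
    · rw [min_eq_right h.le]
      rw [min_eq_right h.le] at hkey
      have h5 : (x 0 - v 0)^2 ≤ (x 0)^2 := by nlinarith [sq_nonneg (x 1 - v 1)]
      have : 0 ≤ v 0 := by nlinarith
      linarith
  · exact hv1



private lemma projB_coord (B : Set (EuclideanSpace ℝ (Fin 2)))
    (hB : B = {p | 0 ≤ p 0})
    (PB : EuclideanSpace ℝ (Fin 2) → EuclideanSpace ℝ (Fin 2))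
    (hPB : ∀ x, PB x ∈ B ∧ ∀ w ∈ B, ‖x - PB x‖ ≤ ‖x - w‖)
    (x : EuclideanSpace ℝ (Fin 2)) :
    (PB x) 0 = max (x 0) 0 ∧ (PB x) 1 = x 1 := by
  obtain ⟨hmem, hmin⟩ := hPB x
  set v := PB x with hv
  have hv0 : 0 ≤ v 0 := by rw [hB] at hmem; exact hmem
  set w : EuclideanSpace ℝ (Fin 2) :=
    (WithLp.equiv 2 (Fin 2 → ℝ)).symm ![max (x 0) 0, x 1] with hw
  have hw0 : w 0 = max (x 0) 0 := by simp [hw]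
  have hw1 : w 1 = x 1 := by simp [hw]
  have hwB : w ∈ B := by rw [hB]; simpa [hw0] using le_max_right (x 0) 0
  have hle := hmin w hwB
  rw [norm_sub_eq2, norm_sub_eq2, hw0, hw1, sub_self] at hle
  have h2 : (0:ℝ) ≤ (x 0 - max (x 0) 0)^2 + 0^2 := by positivity
  have hkey : (x 0 - v 0)^2 + (x 1 - v 1)^2 ≤ (x 0 - max (x 0) 0)^2 := by
    simpa using (Real.sqrt_le_sqrt_iff h2).mp hle
  have h3 : (x 0 - max (x 0) 0)^2 ≤ (x 0 - v 0)^2 := by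
    rcases le_or_gt 0 (x 0) with h | h
    · rw [max_eq_left h]; simpa using sq_nonneg (x 0 - v 0)
    · rw [max_eq_right h.le]; nlinarith
  have hv1 : v 1 = x 1 := by
    have h4 : (x 1 - v 1)^2 ≤ 0 := by linarith
    have h5 : (x 1 - v 1)^2 = 0 := le_antisymm h4 (sq_nonneg _)
    have := pow_eq_zero_iff (n := 2) (by norm_num) |>.mp h5
    linarith [sub_eq_zero.mp this]
  refine ⟨?_, hv1⟩
  rcases le_or_gt 0 (x 0) with h | h
  · rw [max_eq_left h]
    have h5 : (x 0 - v 0)^2 ≤ 0 := by rw [max_eq_left h] at hkey; nlinarith [sq_nonneg (x 1 - v 1)]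
    have h6 : (x 0 - v 0)^2 = 0 := le_antisymm h5 (sq_nonneg _)
    have := pow_eq_zero_iff (n := 2) (by norm_num) |>.mp h6
    linarith [sub_eq_zero.mp this]
  · rw [max_eq_right h.le]
    rw [max_eq_right h.le] at hkey
    have h5 : (x 0 - v 0)^2 ≤ (x 0)^2 := by nlinarith [sq_nonneg (x 1 - v 1)]
    have : v 0 ≤ 0 := by nlinarith
    linarith


/-- Example 4: `A = {(x,y) : x ≤ 0}` (left half-plane), `B = {(x,y) : x ≥ 0}` (right
half-plane), `t ∈ (1/2, 1)`, and `T = (1-t)Id + t P_B^{1/t} ∘ P_A^{1/t}`.  For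
`x₀ = (d₀, y)` with `d₀ > 0`, `y > 0`, the iterates satisfy
`T^n x₀ = ((1/t - 1)^n d₀, y)`; hence they never lie in `Fix T = A ∩ B` (the `y`-axis)
but converge to `(0, y)`. -/
theorem stmt12 (A B : Set (EuclideanSpace ℝ (Fin 2)))
    (hA : A = {p | p 0 ≤ 0})
    (hB : B = {p | 0 ≤ p 0})
    (t : ℝ) (ht : t ∈ Set.Ioo (1 / 2 : ℝ) 1)
    (PA PB T : EuclideanSpace ℝ (Fin 2) → EuclideanSpace ℝ (Fin 2))
    (hPA : ∀ x, PA x ∈ A ∧ ∀ w ∈ A, ‖x - PA x‖ ≤ ‖x - w‖)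
    (hPB : ∀ x, PB x ∈ B ∧ ∀ w ∈ B, ‖x - PB x‖ ≤ ‖x - w‖)
    (hT : ∀ x, T x = (1 - t) • x +
      t • ((1 - 1 / t) • ((1 - 1 / t) • x + (1 / t) • PA x) +
        (1 / t) • PB ((1 - 1 / t) • x + (1 / t) • PA x)))
    (d₀ y : ℝ) (hd₀ : 0 < d₀) (hy : 0 < y)
    (x₀ q : EuclideanSpace ℝ (Fin 2)) (hx₀0 : x₀ 0 = d₀) (hx₀1 : x₀ 1 = y)
    (hq0 : q 0 = 0) (hq1 : q 1 = y) :
    (∀ n : ℕ, (T^[n] x₀) 0 = (1 / t - 1) ^ n * d₀ ∧ (T^[n] x₀) 1 = y ∧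
      T^[n] x₀ ∉ A ∩ B) ∧
    Filter.Tendsto (fun n => T^[n] x₀) Filter.atTop (nhds q) := by
  obtain ⟨ht1, ht2⟩ := ht
  have ht0 : 0 < t := by linarith
  have hs1 : 1 < 1 / t := (one_lt_div ht0).mpr ht2
  have hs2 : 1 / t < 2 := by rw [div_lt_iff₀ ht0]; linarith
  -- the key one-step computation
  have step : ∀ x : EuclideanSpace ℝ (Fin 2), 0 < x 0 → x 1 = y →
      T x 0 = (1 / t - 1) * x 0 ∧ T x 1 = y := by
    intro x hx0 hx1
    obtain ⟨hA0, hA1⟩ := projA_coord A hA PA hPA x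
    have hA0' : PA x 0 = 0 := by rw [hA0, min_eq_right hx0.le]
    set z : EuclideanSpace ℝ (Fin 2) := (1 - 1 / t) • x + (1 / t) • PA x with hz
    have hz0 : z 0 = (1 - 1 / t) * x 0 := by
      simp [hz, PiLp.add_apply, PiLp.smul_apply, smul_eq_mul, hA0']
    have hz1 : z 1 = y := by
      simp only [hz, PiLp.add_apply, PiLp.smul_apply, smul_eq_mul, hA1, hx1]
      field_simp
      ring
    have hz0neg : z 0 < 0 := by
      rw [hz0]
      exact mul_neg_of_neg_of_pos (by linarith) hx0
    obtain ⟨hB0, hB1⟩ := projB_coord B hB PB hPB z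
    have hB0' : PB z 0 = 0 := by rw [hB0, max_eq_right hz0neg.le]
    have hT0 : T x 0 = (1 - t) * x 0 + t * ((1 - 1 / t) * z 0 + (1 / t) * PB z 0) := by
      rw [hT x]
      simp [PiLp.add_apply, PiLp.smul_apply, smul_eq_mul, hz]
      ring
    have hT1 : T x 1 = (1 - t) * x 1 + t * ((1 - 1 / t) * z 1 + (1 / t) * PB z 1) := by
      rw [hT x]
      simp [PiLp.add_apply, PiLp.smul_apply, smul_eq_mul, hz]
      ring
    constructor
    · rw [hT0, hB0', hz0]
      field_simp
      ring
    · rw [hT1, hB1, hz1, hx1]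
      field_simp
      ring
  have hr0 : 0 < 1 / t - 1 := by linarith
  have key : ∀ n : ℕ, (T^[n] x₀) 0 = (1 / t - 1) ^ n * d₀ ∧ (T^[n] x₀) 1 = y := by
    intro n
    induction n with
    | zero => simpa using ⟨hx₀0, hx₀1⟩
    | succ n ih =>
      obtain ⟨ih0, ih1⟩ := ih
      have hpos : 0 < (T^[n] x₀) 0 := by
        rw [ih0]; positivity
      obtain ⟨h0, h1⟩ := step (T^[n] x₀) hpos ih1
      rw [Function.iterate_succ_apply']
      refine ⟨?_, h1⟩
      rw [h0, ih0]; ring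
  constructor
  · intro n
    obtain ⟨h0, h1⟩ := key n
    refine ⟨h0, h1, ?_⟩
    intro ⟨hmemA, _⟩
    rw [hA] at hmemA
    have : (T^[n] x₀) 0 ≤ 0 := hmemA
    rw [h0] at this
    nlinarith [pow_pos hr0 n]
  · rw [tendsto_iff_dist_tendsto_zero]
    have hd : ∀ n : ℕ, dist (T^[n] x₀) q = (1 / t - 1) ^ n * d₀ := by
      intro n
      obtain ⟨h0, h1⟩ := key n
      rw [EuclideanSpace.dist_eq, Fin.sum_univ_two, h0, h1, hq0, hq1]
      have ha : dist ((1 / t - 1) ^ n * d₀) (0:ℝ) = (1 / t - 1) ^ n * d₀ := by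
        rw [Real.dist_eq, sub_zero, abs_of_pos (by positivity)]
      rw [ha, dist_self]
      simpa using Real.sqrt_sq (show (0:ℝ) ≤ (1 / t - 1) ^ n * d₀ by positivity)
    simp only [hd]
    have : Filter.Tendsto (fun n : ℕ => (1 / t - 1) ^ n) Filter.atTop (nhds 0) := by
      apply tendsto_pow_atTop_nhds_zero_of_lt_one hr0.le
      linarith
    have := this.mul_const d₀
    simpa using this
end

section
/- Let A = {(ρ,θ) : π/4 ≤ θ ≤ 5π/4} and B = {(x,y) ∈ R² : y ≤ 0} be closed convex cones in R², and T = P_B ∘ P_A the alternating projection operator. For x₀ = (x, y) ∈ R² \ (A ∪ B), the iterates satisfy T^n(x₀) = ((x+y)/2^n, 0) for all n ≥ 1; in particular T^n(x₀) ≠ T^{n+1}(x₀) whenever x + y ≠ 0, so the method never reaches Fix T, yet T^n(x₀) → 0 ∈ Fix T. -/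
/-!
Both sets are half-planes `{p | ⟪a, p⟫ ≤ 0}`, and a nearest point of a set is pinned down by the
variational inequality, which for a half-plane is solved by the orthogonal projection onto its
boundary line. Hence `P_A (x, y) = ((x + y) / 2, (x + y) / 2)` below the diagonal and
`P_B (u, v) = (u, 0)` above the axis, so `T` sends `x₀` to `((x + y) / 2, 0)` on the positive
half-axis, where it halves the abscissa at every step.
-/

open Filter Topology RealInnerProductSpace

section MetricProjection

variable {E : Type*} [NormedAddCommGroup E] [InnerProductSpace ℝ E]

def IsMetricProjection (K : Set E) (P : E → E) : Prop :=
  ∀ x, P x ∈ K ∧ ∀ w ∈ K, ‖x - P x‖ ≤ ‖x - w‖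

namespace IsMetricProjection

variable {K : Set E} {P : E → E}

/-- Since `‖x - w‖² = ‖x - q‖² + ‖q - w‖² - 2 ⟪x - q, w - q⟫`, the variational inequality makes
`q` strictly nearer to `x` than every other point of `K`. -/
theorem apply_eq_of_inner_le_zero (hP : IsMetricProjection K P) {x q : E} (hq : q ∈ K)
    (hvar : ∀ w ∈ K, ⟪x - q, w - q⟫ ≤ 0) : P x = q := by
  obtain ⟨hPx, hmin⟩ := hP x
  have hexpand : ‖x - P x‖ ^ 2 = ‖x - q‖ ^ 2 + ‖q - P x‖ ^ 2 - 2 * ⟪x - q, P x - q⟫ := by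
    rw [← sub_add_sub_cancel x q (P x), norm_add_sq_real, ← neg_sub (P x) q, inner_neg_right]
    ring
  have hle : ‖x - P x‖ ^ 2 ≤ ‖x - q‖ ^ 2 := by gcongr; exact hmin q hq
  have hsq : ‖q - P x‖ ^ 2 ≤ 0 := by nlinarith [hvar _ hPx]
  rw [← sub_eq_zero, ← norm_eq_zero, norm_sub_rev]
  exact pow_eq_zero_iff two_ne_zero |>.mp (le_antisymm hsq (sq_nonneg _))

theorem apply_eq_self (hP : IsMetricProjection K P) {x : E} (hx : x ∈ K) : P x = x :=
  hP.apply_eq_of_inner_le_zero hx fun w _ => by simp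

theorem apply_eq_of_halfspace {a : E} (hP : IsMetricProjection {p | ⟪a, p⟫ ≤ 0} P) {x : E}
    (hx : 0 ≤ ⟪a, x⟫) : P x = x - (⟪a, x⟫ / ‖a‖ ^ 2) • a := by
  set c := ⟪a, x⟫ / ‖a‖ ^ 2
  have hq : ⟪a, x - c • a⟫ = 0 := by
    rw [inner_sub_right, real_inner_smul_right, real_inner_self_eq_norm_sq,
      div_mul_cancel_of_imp fun h => by simp_all, sub_self]
  refine hP.apply_eq_of_inner_le_zero hq.le fun w hw => ?_
  rw [sub_sub_cancel, real_inner_smul_left, inner_sub_right, hq, sub_zero]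
  exact mul_nonpos_of_nonneg_of_nonpos (by positivity) hw

end IsMetricProjection

end MetricProjection

local notation "ℝ²" => EuclideanSpace ℝ (Fin 2)

theorem inner_apply_two (u v : ℝ²) : ⟪u, v⟫ = u 0 * v 0 + u 1 * v 1 := by
  simp [PiLp.inner_apply, Fin.sum_univ_two, mul_comm]

theorem norm_sq_two (u : ℝ²) : ‖u‖ ^ 2 = u 0 ^ 2 + u 1 ^ 2 := by
  rw [← real_inner_self_eq_norm_sq, inner_apply_two, sq, sq]

theorem setOf_le_eq_halfspace : {p : ℝ² | p 0 ≤ p 1} = {p | ⟪!₂[1, -1], p⟫ ≤ 0} := by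
  ext p
  simp [inner_apply_two, ← sub_eq_add_neg]

theorem setOf_nonpos_eq_halfspace : {p : ℝ² | p 1 ≤ 0} = {p | ⟪!₂[0, 1], p⟫ ≤ 0} := by
  ext p
  simp [inner_apply_two]

theorem IsMetricProjection.apply_eq_diagonal_of_le {PA : ℝ² → ℝ²}
    (hPA : IsMetricProjection {p : ℝ² | p 0 ≤ p 1} PA) {x : ℝ²} (hx : x 1 ≤ x 0) :
    PA x = !₂[(x 0 + x 1) / 2, (x 0 + x 1) / 2] := by
  rw [setOf_le_eq_halfspace] at hPA
  rw [hPA.apply_eq_of_halfspace (by simp [inner_apply_two]; linarith)]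
  ext i
  fin_cases i <;> simp [inner_apply_two, norm_sq_two] <;> ring

theorem IsMetricProjection.apply_eq_axis_of_nonneg {PB : ℝ² → ℝ²}
    (hPB : IsMetricProjection {p : ℝ² | p 1 ≤ 0} PB) {x : ℝ²} (hx : 0 ≤ x 1) :
    PB x = !₂[x 0, 0] := by
  rw [setOf_nonpos_eq_halfspace] at hPB
  rw [hPB.apply_eq_of_halfspace (by simpa [inner_apply_two])]
  ext i
  fin_cases i <;> simp [inner_apply_two, norm_sq_two]

section AlternatingProjections

variable {PA PB : ℝ² → ℝ²}

theorem projB_comp_projA_apply (hPA : IsMetricProjection {p : ℝ² | p 0 ≤ p 1} PA)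
    (hPB : IsMetricProjection {p : ℝ² | p 1 ≤ 0} PB) {x : ℝ²} (hx : x 1 ≤ x 0)
    (hsum : 0 ≤ x 0 + x 1) :
    (PB ∘ PA) x = !₂[(x 0 + x 1) / 2, 0] := by
  rw [Function.comp_apply, hPA.apply_eq_diagonal_of_le hx,
    hPB.apply_eq_axis_of_nonneg (by simpa using by linarith)]
  simp

theorem iterate_projB_comp_projA_axis (hPA : IsMetricProjection {p : ℝ² | p 0 ≤ p 1} PA)
    (hPB : IsMetricProjection {p : ℝ² | p 1 ≤ 0} PB) {t : ℝ} (ht : 0 ≤ t) (n : ℕ) :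
    (PB ∘ PA)^[n] !₂[t, 0] = !₂[t / 2 ^ n, 0] := by
  induction n with
  | zero => simp
  | succ n ih =>
    have htn : 0 ≤ t / 2 ^ n := by positivity
    rw [Function.iterate_succ_apply', ih, projB_comp_projA_apply hPA hPB (by simpa) (by simpa)]
    simp [pow_succ, div_div]

end AlternatingProjections

theorem tendsto_axis_div_two_pow (t : ℝ) :
    Tendsto (fun n : ℕ => (!₂[t / 2 ^ n, 0] : ℝ²)) atTop (𝓝 0) := by
  have hcoord : Tendsto (fun n : ℕ => t / 2 ^ n) atTop (𝓝 0) :=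
    tendsto_const_nhds.div_atTop (tendsto_pow_atTop_atTop_of_one_lt one_lt_two)
  have hzero : (!₂[0, 0] : ℝ²) = 0 := by ext i; fin_cases i <;> rfl
  have hline := ((by fun_prop : Continuous fun s : ℝ => (!₂[s, 0] : ℝ²)).tendsto 0).comp hcoord
  rwa [hzero] at hline

/-- Example 6: `A = {(ρ,θ) : π/4 ≤ θ ≤ 5π/4}` (the half-plane `{(x,y) : x ≤ y}`),
`B = {(x,y) : y ≤ 0}`, and `T = P_B ∘ P_A` the alternating projection operator.  For
`x₀ = (x, y) ∈ ℝ² \ (A ∪ B)`, the iterates satisfy `T^n x₀ = ((x+y)/2^n, 0)` for all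
`n ≥ 1`; in particular `T^n x₀ ≠ T^{n+1} x₀` whenever `x + y ≠ 0`, so the method never
reaches `Fix T`, yet `T^n x₀ → 0 ∈ Fix T`. -/
theorem stmt13 (A B : Set (EuclideanSpace ℝ (Fin 2)))
    (hA : A = {p | p 0 ≤ p 1})
    (hB : B = {p | p 1 ≤ 0})
    (PA PB T : EuclideanSpace ℝ (Fin 2) → EuclideanSpace ℝ (Fin 2))
    (hPA : ∀ x, PA x ∈ A ∧ ∀ w ∈ A, ‖x - PA x‖ ≤ ‖x - w‖)
    (hPB : ∀ x, PB x ∈ B ∧ ∀ w ∈ B, ‖x - PB x‖ ≤ ‖x - w‖)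
    (hT : ∀ x, T x = PB (PA x))
    (x₀ : EuclideanSpace ℝ (Fin 2)) (hx₀ : x₀ ∉ A ∪ B) :
    (∀ n : ℕ, 1 ≤ n → (T^[n] x₀) 0 = (x₀ 0 + x₀ 1) / 2 ^ n ∧ (T^[n] x₀) 1 = 0 ∧
      (x₀ 0 + x₀ 1 ≠ 0 → T^[n + 1] x₀ ≠ T^[n] x₀)) ∧
    Filter.Tendsto (fun n => T^[n] x₀) Filter.atTop (nhds 0) ∧ T 0 = 0 := by
  subst hA hB
  replace hPA : IsMetricProjection _ PA := hPA
  replace hPB : IsMetricProjection _ PB := hPB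
  obtain rfl : T = PB ∘ PA := funext hT
  simp only [Set.mem_union, Set.mem_ofPred_eq, not_or, not_le] at hx₀
  have hsum : 0 < x₀ 0 + x₀ 1 := by linarith
  have horbit (n : ℕ) : (PB ∘ PA)^[n + 1] x₀ = !₂[(x₀ 0 + x₀ 1) / 2 ^ (n + 1), 0] := by
    rw [Function.iterate_succ_apply, projB_comp_projA_apply hPA hPB hx₀.1.le hsum.le,
      iterate_projB_comp_projA_axis hPA hPB (by positivity), div_div, pow_succ']
  refine ⟨fun n hn => ?_, ?_, ?_⟩
  · obtain ⟨m, rfl⟩ := Nat.exists_eq_add_of_le' hn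
    refine ⟨by simp [horbit], by simp [horbit], fun _ heq => ?_⟩
    have hlt : (x₀ 0 + x₀ 1) / 2 ^ (m + 1 + 1) < (x₀ 0 + x₀ 1) / 2 ^ (m + 1) :=
      div_lt_div_of_pos_left hsum (by positivity) (pow_lt_pow_right₀ one_lt_two (by omega))
    exact hlt.ne (by simpa [horbit] using congrArg (fun p : ℝ² => p 0) heq)
  · rw [← tendsto_add_atTop_iff_nat 1]
    simp_rw [horbit]
    exact (tendsto_axis_div_two_pow _).comp (tendsto_add_atTop_nat 1)
  · rw [Function.comp_apply, hPA.apply_eq_self (by simp), hPB.apply_eq_self (by simp)]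
end

section
/- Let I be a connected closed subset of the unit circle and φ: I → I a continuous piecewise map whose pieces (finitely many) are each the identity, a constant map, or a fixed rotation. If Fix φ ≠ ∅, then there exists n ∈ N such that φ^n(I) ⊆ Fix φ. -/
/-- A connected closed subset `I` of the unit circle is modeled by an interval
`[a, b] ⊆ ℝ` via arc-length parametrization (rotations act as translations
`x ↦ x + c`).  Statement: if `φ` maps `[a,b]` to itself, is continuous on `[a,b]`,
is piecewise (on finitely many subarcs) the identity, a constant, or a fixed rotation,
and `Fix φ ≠ ∅`, then there exists `n` with `φ^[n](I) ⊆ Fix φ`. -/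
theorem stmt15 (a b : ℝ) (hab : a ≤ b) (φ : ℝ → ℝ)
    (hmap : Set.MapsTo φ (Set.Icc a b) (Set.Icc a b))
    (hcont : ContinuousOn φ (Set.Icc a b))
    (n : ℕ) (t : Fin (n + 1) → ℝ) (hmono : Monotone t)
    (ht0 : t 0 = a) (htn : t (Fin.last n) = b)
    (hpieces : ∀ i : Fin n,
      (∀ x ∈ Set.Icc (t i.castSucc) (t i.succ), φ x = x) ∨
      (∃ c, ∀ x ∈ Set.Icc (t i.castSucc) (t i.succ), φ x = c) ∨
      (∃ c, ∀ x ∈ Set.Icc (t i.castSucc) (t i.succ), φ x = x + c))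
    (hfix : ∃ x ∈ Set.Icc a b, φ x = x) :
    ∃ m : ℕ, ∀ x ∈ Set.Icc a b, φ (φ^[m] x) = φ^[m] x := by
  classical
  rcases Nat.eq_zero_or_pos n with hn0 | hn
  · -- degenerate case: a = b
    subst hn0
    obtain ⟨x₀, hx₀, hfx₀⟩ := hfix
    have hba : b = a := by rw [← ht0, ← htn]; rfl
    refine ⟨0, ?_⟩
    intro x hx
    have hxa : x = a := le_antisymm (hba ▸ hx.2) hx.1
    have hx0a : x₀ = a := le_antisymm (hba ▸ hx₀.2) hx₀.1
    simpa [hxa, hx0a] using hfx₀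
  -- choose constants for each piece
  have hp : ∀ i : Fin n, ∃ cc dd : ℝ,
      (∀ x ∈ Set.Icc (t i.castSucc) (t i.succ), φ x = x) ∨
      (∀ x ∈ Set.Icc (t i.castSucc) (t i.succ), φ x = cc) ∨
      (∀ x ∈ Set.Icc (t i.castSucc) (t i.succ), φ x = x + dd) := by
    intro i
    rcases hpieces i with h | ⟨cc, h⟩ | ⟨cc, h⟩
    exacts [⟨0, 0, Or.inl h⟩, ⟨cc, 0, Or.inr (Or.inl h)⟩, ⟨0, cc, Or.inr (Or.inr h)⟩]
  choose c d hcd using hp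
  -- the minimal nonzero translation step δ
  set s : Finset ℝ :=
    insert 1 ((Finset.univ.image fun i => |d i|).filter (fun r => 0 < r)) with hs_def
  have hsne : s.Nonempty := ⟨1, Finset.mem_insert_self _ _⟩
  set δ : ℝ := s.min' hsne with hδ_def
  have hδpos : 0 < δ := by
    rw [hδ_def, Finset.lt_min'_iff]
    intro y hy
    rcases Finset.mem_insert.1 hy with h | h
    · simp [h]
    · exact (Finset.mem_filter.1 h).2
  have hδd : ∀ i : Fin n, d i ≠ 0 → δ ≤ |d i| := by
    intro i hi
    apply Finset.min'_le
    apply Finset.mem_insert_of_mem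
    refine Finset.mem_filter.2 ⟨Finset.mem_image.2 ⟨i, Finset.mem_univ i, rfl⟩, abs_pos.2 hi⟩
  -- coverage
  have hcover : ∀ y ∈ Set.Icc a b, ∃ i : Fin n,
      y ∈ Set.Icc (t i.castSucc) (t i.succ) := by
    intro y hy
    have key : ∀ j : ℕ, ∀ hj : j < n, y ≤ t ⟨j + 1, Nat.succ_lt_succ hj⟩ →
        ∃ i : Fin n, y ∈ Set.Icc (t i.castSucc) (t i.succ) := by
      intro j
      induction j with
      | zero =>
        intro hj h1
        refine ⟨⟨0, hj⟩, ⟨?_, ?_⟩⟩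
        · rw [Fin.castSucc_mk]
          exact le_trans (le_of_eq (by rw [← ht0]; rfl)) hy.1
        · rw [Fin.succ_mk]; exact h1
      | succ j ih =>
        intro hj h1
        by_cases h2 : y ≤ t ⟨j + 1, Nat.succ_lt_succ (Nat.lt_of_succ_lt hj)⟩
        · exact ih (Nat.lt_of_succ_lt hj) h2
        · refine ⟨⟨j + 1, hj⟩, ⟨?_, ?_⟩⟩
          · rw [Fin.castSucc_mk]; exact le_of_not_ge h2
          · rw [Fin.succ_mk]; exact h1
    have hn1 : n - 1 < n := Nat.sub_lt hn Nat.one_pos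
    apply key (n - 1) hn1
    have : (⟨n - 1 + 1, Nat.succ_lt_succ hn1⟩ : Fin (n + 1)) = Fin.last n := by
      apply Fin.ext; simp; omega
    rw [this, htn]; exact hy.2
  -- classification
  have hclass : ∀ y ∈ Set.Icc a b,
      φ y = y ∨ (∃ i, φ y = c i) ∨ δ ≤ |φ y - y| := by
    intro y hy
    obtain ⟨i, hyi⟩ := hcover y hy
    rcases hcd i with h | h | h
    · exact Or.inl (h y hyi)
    · exact Or.inr (Or.inl ⟨i, h y hyi⟩)
    · rcases eq_or_ne (d i) 0 with h0 | h0
      · left; rw [h y hyi, h0, add_zero]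
      · right; right; rw [h y hyi]
        simpa using hδd i h0
  -- φ is monotone on [a, b]
  have hpiece_mono : ∀ i : Fin n, MonotoneOn φ (Set.Icc (t i.castSucc) (t i.succ)) := by
    intro i
    rcases hcd i with h | h | h <;> intro x hx y hy hxy <;> rw [h x hx, h y hy] <;> linarith
  have hmonoI : ∀ j : ℕ, ∀ hj : j ≤ n,
      MonotoneOn φ (Set.Icc a (t ⟨j, Nat.lt_succ_of_le hj⟩)) := by
    intro j
    induction j with
    | zero =>
      intro hj x hx y hy hxy
      have h0a : t ⟨0, Nat.lt_succ_of_le hj⟩ = a := by rw [← ht0]; rfl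
      have hxa : x = a := le_antisymm (h0a ▸ hx.2) hx.1
      have hya : y = a := le_antisymm (h0a ▸ hy.2) hy.1
      rw [hxa, hya]
    | succ j ih =>
      intro hj
      have hjn : j < n := hj
      have m1 := ih (le_of_lt hjn)
      have m2 := hpiece_mono ⟨j, hjn⟩
      rw [Fin.castSucc_mk, Fin.succ_mk] at m2
      have hatj : a ≤ t ⟨j, Nat.lt_succ_of_le (le_of_lt hjn)⟩ := by
        rw [← ht0]; exact hmono (Fin.zero_le _)
      have htjj : t ⟨j, Nat.lt_succ_of_le (le_of_lt hjn)⟩ ≤ t ⟨j + 1, Nat.lt_succ_of_le hj⟩ :=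
        hmono (by simp [Fin.le_def])
      intro x hx y hy hxy
      rcases le_total x (t ⟨j, Nat.lt_succ_of_le (le_of_lt hjn)⟩) with h1 | h1
      · rcases le_total y (t ⟨j, Nat.lt_succ_of_le (le_of_lt hjn)⟩) with h2 | h2
        · exact m1 ⟨hx.1, h1⟩ ⟨hy.1, h2⟩ hxy
        · calc φ x ≤ φ (t ⟨j, Nat.lt_succ_of_le (le_of_lt hjn)⟩) :=
                m1 ⟨hx.1, h1⟩ ⟨hatj, le_refl _⟩ h1
            _ ≤ φ y := m2 ⟨le_refl _, htjj⟩ ⟨h2, hy.2⟩ h2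
      · exact m2 ⟨h1, hx.2⟩ ⟨le_trans h1 hxy, hy.2⟩ hxy
  have hmono' : MonotoneOn φ (Set.Icc a b) := by
    have := hmonoI n le_rfl
    have hnb : t ⟨n, Nat.lt_succ_of_le le_rfl⟩ = b := by rw [← htn]; rfl
    rwa [hnb] at this
  -- the uniform bound
  set K : ℕ := ⌈(b - a) / δ⌉₊ with hK_def
  set m : ℕ := n + K + 1 with hm_def
  refine ⟨m, ?_⟩
  intro x hx
  set v : ℕ → ℝ := fun k => φ^[k] x with hv_def
  have hsucc : ∀ k, v (k + 1) = φ (v k) := fun k => Function.iterate_succ_apply' φ k x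
  have hvmem : ∀ k, v k ∈ Set.Icc a b := by
    intro k
    induction k with
    | zero => exact hx
    | succ k ih => rw [hsucc]; exact hmap ih
  have hdir : (∀ k, v k ≤ v (k + 1)) ∨ (∀ k, v (k + 1) ≤ v k) := by
    rcases le_total (v 0) (v 1) with h | h
    · left
      intro k
      induction k with
      | zero => exact h
      | succ k ih =>
        have h2 := hmono' (hvmem k) (hvmem (k + 1)) ih
        rw [← hsucc k, ← hsucc (k + 1)] at h2
        exact h2
    · right
      intro k
      induction k with
      | zero => exact h
      | succ k ih =>
        have h2 := hmono' (hvmem (k + 1)) (hvmem k) ih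
        rw [← hsucc k, ← hsucc (k + 1)] at h2
        exact h2
  -- once fixed, always fixed
  have hprop : ∀ k, φ (v k) = v k → ∀ l, k ≤ l → φ (v l) = v l := by
    intro k hk l hl
    induction l, hl using Nat.le_induction with
    | base => exact hk
    | succ l hl ih => rw [hsucc l, ih]; exact ih
  suffices hex : ∃ k ≤ m, φ (v k) = v k by
    obtain ⟨k, hk, hfk⟩ := hex
    exact hprop k hfk m hk
  by_contra hno
  push_neg at hno
  -- every step up to m is strictly moving
  have hne : ∀ k ≤ m, v (k + 1) ≠ v k := by
    intro k hk h
    exact hno k hk (by rw [← hsucc]; exact h)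
  -- strict monotonicity of the orbit up to m+1
  have hstrict : ∀ j k : ℕ, j < k → k ≤ m + 1 → v j ≠ v k := by
    intro j k hjk hk
    rcases hdir with h | h
    · have hmv : Monotone v := monotone_nat_of_le_succ h
      have h1 : v j < v (j + 1) :=
        lt_of_le_of_ne (h j) (Ne.symm (hne j (by omega)))
      exact ne_of_lt (lt_of_lt_of_le h1 (hmv hjk))
    · have hmv : Antitone v := antitone_nat_of_succ_le h
      have h1 : v (j + 1) < v j :=
        lt_of_le_of_ne (h j) (hne j (by omega))
      exact ne_of_gt (lt_of_le_of_lt (hmv hjk) h1)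
  -- the set of constant-jump steps
  set A : Finset ℕ := (Finset.range m).filter (fun k => ∃ i, v (k + 1) = c i) with hA_def
  have hA_sub : A ⊆ Finset.range m := Finset.filter_subset _ _
  have hAcard : A.card ≤ n := by
    have h1 : A.card ≤ (Finset.univ.image c).card := by
      apply Finset.card_le_card_of_injOn (fun k => v (k + 1))
      · intro k hk
        obtain ⟨i, hi⟩ := (Finset.mem_filter.1 hk).2
        exact Finset.mem_image.2 ⟨i, Finset.mem_univ i, hi.symm⟩
      · intro k1 hk1 k2 hk2 hv12
        have hk1m : k1 < m := Finset.mem_range.1 (hA_sub hk1)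
        have hk2m : k2 < m := Finset.mem_range.1 (hA_sub hk2)
        by_contra hne12
        rcases Nat.lt_or_ge k1 k2 with hlt | hge
        · exact hstrict (k1 + 1) (k2 + 1) (by omega) (by omega) hv12
        · have hlt : k2 < k1 := by omega
          exact hstrict (k2 + 1) (k1 + 1) (by omega) (by omega) hv12.symm
    calc A.card ≤ (Finset.univ.image c).card := h1
      _ ≤ (Finset.univ : Finset (Fin n)).card := Finset.card_image_le
      _ = n := by simp
  -- steps not in A move by at least δ
  have hbig : ∀ k ∈ Finset.range m \ A, δ ≤ |v (k + 1) - v k| := by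
    intro k hk
    have hkm : k < m := Finset.mem_range.1 (Finset.mem_sdiff.1 hk).1
    have hkA : ¬∃ i, v (k + 1) = c i := by
      intro h
      exact (Finset.mem_sdiff.1 hk).2 (Finset.mem_filter.2 ⟨Finset.mem_range.2 hkm, h⟩)
    rcases hclass (v k) (hvmem k) with h | h | h
    · exact absurd h (hno k (by omega))
    · exact absurd (by rw [hsucc]; exact h) hkA
    · rw [hsucc]; exact h
  -- telescoping sum bound
  have hsum : ∑ k ∈ Finset.range m, |v (k + 1) - v k| ≤ b - a := by
    rcases hdir with h | h
    · have : ∀ k ∈ Finset.range m, |v (k + 1) - v k| = v (k + 1) - v k := by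
        intro k _; rw [abs_of_nonneg (by linarith [h k])]
      rw [Finset.sum_congr rfl this, Finset.sum_range_sub]
      have h1 := (hvmem m).2
      have h2 := (hvmem 0).1
      linarith
    · have : ∀ k ∈ Finset.range m, |v (k + 1) - v k| = -(v (k + 1) - v k) := by
        intro k _; rw [abs_of_nonpos (by linarith [h k])]
      rw [Finset.sum_congr rfl this, Finset.sum_neg_distrib, Finset.sum_range_sub]
      have h1 := (hvmem m).1
      have h2 := (hvmem 0).2
      linarith
  -- counting
  have hBcard : ((Finset.range m \ A).card : ℝ) ≤ (b - a) / δ := by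
    have h1 : (Finset.range m \ A).card • δ ≤ ∑ k ∈ Finset.range m \ A, |v (k + 1) - v k| :=
      Finset.card_nsmul_le_sum _ _ _ hbig
    have h2 : ∑ k ∈ Finset.range m \ A, |v (k + 1) - v k| ≤
        ∑ k ∈ Finset.range m, |v (k + 1) - v k| :=
      Finset.sum_le_sum_of_subset_of_nonneg (Finset.sdiff_subset) (fun k _ _ => abs_nonneg _)
    rw [nsmul_eq_mul] at h1
    rw [le_div_iff₀ hδpos]
    linarith
  have hBK : (Finset.range m \ A).card ≤ K := by
    have : ((Finset.range m \ A).card : ℝ) ≤ (K : ℝ) :=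
      le_trans hBcard (Nat.le_ceil _)
    exact_mod_cast this
  have hcardeq : (Finset.range m \ A).card = m - A.card := by
    rw [Finset.card_sdiff_of_subset hA_sub, Finset.card_range]
  have hAm : A.card ≤ m := le_trans (Finset.card_le_card hA_sub) (by rw [Finset.card_range])
  omega
end

section
/- Let A, B ⊆ R² be closed convex cones and T_DR the Douglas–Rachford operator. If Fix T_DR = {0}, then for every n ∈ N, T_DR^n maps R² \ Ker T_DR into R² \ Fix T_DR; i.e., starting from any x₀ with T_DR(x₀) ≠ 0, the method never reaches a fixed point in finitely many steps. -/
/-!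
A Douglas–Rachford operator `T` for convex cones is firmly nonexpansive (it is the
average of the identity and a composition of two nonexpansive reflections) and positively
homogeneous (projections onto cones are). These two properties force the image of `T` to meet
its kernel only at `0`: if `T (T z) = 0`, comparing `T z` with `t • z` in the firm
nonexpansiveness inequality gives `‖T z‖² ≤ t (⟪T z, z⟫ - ‖T z‖²)` for every `t > 0`.
Hence an orbit starting outside the kernel never enters it, and since `Fix T = {0}` it never
reaches a fixed point.
-/

open RealInnerProductSpace

lemma apply_iterate_ne_zero {α : Type*} [Zero α] {T : α → α}
    (hT : ∀ z, T (T z) = 0 → T z = 0) {x : α} (hx : T x ≠ 0) (n : ℕ) : T (T^[n] x) ≠ 0 := by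
  induction n with
  | zero => exact hx
  | succ n ih =>
    rw [Function.iterate_succ_apply']
    exact fun h => ih (hT _ h)

variable {F : Type*} [NormedAddCommGroup F] [InnerProductSpace ℝ F]

def IsNearestPointMap (C : Set F) (P : F → F) : Prop :=
  ∀ x, P x ∈ C ∧ ∀ w ∈ C, ‖x - P x‖ ≤ ‖x - w‖

def FirmlyNonexpansive (T : F → F) : Prop :=
  ∀ x y, ‖T x - T y‖ ^ 2 ≤ ⟪T x - T y, x - y⟫

lemma nonpos_of_forall_pos_le_mul {a c : ℝ} (h : ∀ t : ℝ, 0 < t → a ≤ t * c) : a ≤ 0 := by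
  rcases le_or_gt c 0 with hc | hc
  · linarith [h 1 one_pos]
  · by_contra! ha
    have := h (a / (2 * c)) (by positivity)
    rw [div_mul_eq_mul_div, mul_div_mul_right _ _ hc.ne'] at this
    linarith

namespace IsNearestPointMap

variable {C : Set F} {P : F → F}

lemma inner_sub_nonpos (hC : Convex ℝ C) (hP : IsNearestPointMap C P) (x : F) :
    ∀ w ∈ C, ⟪x - P x, w - P x⟫ ≤ 0 := by
  have : Nonempty C := ⟨⟨P x, (hP x).1⟩⟩
  refine (norm_eq_iInf_iff_real_inner_le_zero hC (hP x).1).mp (le_antisymm ?_ ?_)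
  · exact le_ciInf fun w => (hP x).2 w w.2
  · exact ciInf_le ⟨0, by rintro _ ⟨w, rfl⟩; positivity⟩ (⟨P x, (hP x).1⟩ : C)

lemma eq_of_inner_sub_nonpos (hC : Convex ℝ C) (hP : IsNearestPointMap C P) {x q : F}
    (hq : q ∈ C) (hqx : ∀ w ∈ C, ⟪x - q, w - q⟫ ≤ 0) : P x = q := by
  have h₁ := hP.inner_sub_nonpos hC x q hq
  have h₂ := hqx (P x) (hP x).1
  have hsq : ⟪q - P x, q - P x⟫ ≤ 0 := by
    have e : q - P x = (x - P x) - (x - q) := by abel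
    have e' : P x - q = -(q - P x) := by abel
    rw [e', inner_neg_right] at h₂
    calc ⟪q - P x, q - P x⟫ = ⟪x - P x, q - P x⟫ - ⟪x - q, q - P x⟫ := by
          rw [e, inner_sub_left, ← e]
      _ ≤ 0 := by linarith
  exact (sub_eq_zero.mp (real_inner_self_nonpos.mp hsq)).symm

lemma firmlyNonexpansive (hC : Convex ℝ C) (hP : IsNearestPointMap C P) :
    FirmlyNonexpansive P := by
  intro x y
  have hx := hP.inner_sub_nonpos hC x (P y) (hP y).1
  have hy := hP.inner_sub_nonpos hC y (P x) (hP x).1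
  have e : x - y = (x - P x) - (y - P y) + (P x - P y) := by abel
  have e' : P y - P x = -(P x - P y) := by abel
  rw [e', inner_neg_right, real_inner_comm] at hx
  rw [e, inner_add_right, inner_sub_right, real_inner_self_eq_norm_sq, real_inner_comm (y - P y)]
  linarith

lemma map_smul_of_cone (hC : Convex ℝ C) (hcone : ∀ x ∈ C, ∀ t : ℝ, 0 < t → t • x ∈ C)
    (hP : IsNearestPointMap C P) {t : ℝ} (ht : 0 < t) (x : F) : P (t • x) = t • P x := by
  refine hP.eq_of_inner_sub_nonpos hC (hcone _ (hP x).1 t ht) fun w hw => ?_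
  have h := hP.inner_sub_nonpos hC x _ (hcone _ hw t⁻¹ (inv_pos.mpr ht))
  have e : w - t • P x = t • (t⁻¹ • w - P x) := by
    rw [smul_sub, smul_inv_smul₀ ht.ne']
  rw [← smul_sub, e, real_inner_smul_left, real_inner_smul_right]
  exact mul_nonpos_of_nonneg_of_nonpos ht.le (mul_nonpos_of_nonneg_of_nonpos ht.le h)

end IsNearestPointMap

namespace FirmlyNonexpansive

variable {T : F → F}

lemma norm_reflection_sub_le (hT : FirmlyNonexpansive T) (x y : F) :
    ‖((2 : ℝ) • T x - x) - ((2 : ℝ) • T y - y)‖ ≤ ‖x - y‖ := by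
  have e : ((2 : ℝ) • T x - x) - ((2 : ℝ) • T y - y) = (2 : ℝ) • (T x - T y) - (x - y) := by
    module
  refine (pow_le_pow_iff_left₀ (norm_nonneg _) (norm_nonneg _) two_ne_zero).mp ?_
  rw [e, norm_sub_sq_real, norm_smul, real_inner_smul_left, Real.norm_two]
  nlinarith [hT x y]

lemma apply_eq_zero_of_apply_apply_eq_zero (hT : FirmlyNonexpansive T)
    (hhom : ∀ t : ℝ, 0 < t → ∀ x, T (t • x) = t • T x) {z : F} (hz : T (T z) = 0) :
    T z = 0 := by
  have hbound : ∀ t : ℝ, 0 < t → ‖T z‖ ^ 2 ≤ t * (⟪T z, z⟫ - ‖T z‖ ^ 2) := by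
    intro t ht
    have h := hT (T z) (t • z)
    rw [hz, hhom t ht, zero_sub, norm_neg, norm_smul, Real.norm_of_nonneg ht.le, inner_neg_left,
      inner_sub_right, real_inner_smul_left, real_inner_smul_left, real_inner_smul_right,
      real_inner_self_eq_norm_sq] at h
    nlinarith
  have := nonpos_of_forall_pos_le_mul hbound
  exact norm_eq_zero.mp (pow_eq_zero_iff two_ne_zero |>.mp (le_antisymm this (by positivity)))

end FirmlyNonexpansive

lemma firmlyNonexpansive_average {N : F → F} (hN : ∀ x y, ‖N x - N y‖ ≤ ‖x - y‖) :
    FirmlyNonexpansive (fun x => (1 / 2 : ℝ) • (x + N x)) := by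
  intro x y
  have e : (1 / 2 : ℝ) • (x + N x) - (1 / 2 : ℝ) • (y + N y) =
      (1 / 2 : ℝ) • ((x - y) + (N x - N y)) := by module
  rw [e, norm_smul, real_inner_smul_left, mul_pow, norm_add_sq_real, inner_add_left,
    real_inner_self_eq_norm_sq, real_inner_comm, Real.norm_of_nonneg (by norm_num)]
  nlinarith [hN x y, norm_nonneg (N x - N y)]

theorem stmt19_general (A B : Set (EuclideanSpace ℝ (Fin 2)))
    (hAconv : Convex ℝ A)
    (hBconv : Convex ℝ B)
    (hAcone : ∀ x ∈ A, ∀ t : ℝ, 0 < t → t • x ∈ A)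
    (hBcone : ∀ x ∈ B, ∀ t : ℝ, 0 < t → t • x ∈ B)
    (PA PB T : EuclideanSpace ℝ (Fin 2) → EuclideanSpace ℝ (Fin 2))
    (hPA : ∀ x, PA x ∈ A ∧ ∀ w ∈ A, ‖x - PA x‖ ≤ ‖x - w‖)
    (hPB : ∀ x, PB x ∈ B ∧ ∀ w ∈ B, ‖x - PB x‖ ≤ ‖x - w‖)
    (hT : ∀ x, T x = (1 / 2 : ℝ) •
      (x + ((2 : ℝ) • PB ((2 : ℝ) • PA x - x) - ((2 : ℝ) • PA x - x))))
    (hfix : {x | T x = x} = {0}) :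
    ∀ n : ℕ, ∀ x₀, T x₀ ≠ 0 → T (T^[n] x₀) ≠ T^[n] x₀ := by
  have hPA' : IsNearestPointMap A PA := hPA
  have hPB' : IsNearestPointMap B PB := hPB
  have hfirm : FirmlyNonexpansive T := by
    rw [funext hT]
    refine firmlyNonexpansive_average fun x y => ?_
    exact ((hPB'.firmlyNonexpansive hBconv).norm_reflection_sub_le _ _).trans
      ((hPA'.firmlyNonexpansive hAconv).norm_reflection_sub_le x y)
  have hhom : ∀ t : ℝ, 0 < t → ∀ x, T (t • x) = t • T x := by
    intro t ht x
    have hrefl : (2 : ℝ) • PA (t • x) - t • x = t • ((2 : ℝ) • PA x - x) := by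
      rw [hPA'.map_smul_of_cone hAconv hAcone ht]; module
    rw [hT, hT, hrefl, hPB'.map_smul_of_cone hBconv hBcone ht]
    module
  have hT0 : T 0 = 0 := by simpa using hfix.symm.subset rfl
  intro n x₀ hx₀ hfixed
  have hzero : T^[n] x₀ = 0 := by simpa using hfix.subset hfixed
  exact apply_iterate_ne_zero (fun z => hfirm.apply_eq_zero_of_apply_apply_eq_zero hhom) hx₀ n
    (by rw [hzero, hT0])

/-- Let `A, B ⊆ ℝ²` be closed convex cones and `T_DR` the Douglas–Rachford operator.
If `Fix T_DR = {0}`, then for every `n`, `T_DR^n` maps `ℝ² \ Ker T_DR` into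
`ℝ² \ Fix T_DR`: starting from any `x₀` with `T_DR x₀ ≠ 0`, the method never reaches a
fixed point in finitely many steps. -/
theorem stmt19 (A B : Set (EuclideanSpace ℝ (Fin 2)))
    (hAclosed : IsClosed A) (hAconv : Convex ℝ A)
    (hBclosed : IsClosed B) (hBconv : Convex ℝ B)
    (hAcone : ∀ x ∈ A, ∀ t : ℝ, 0 < t → t • x ∈ A)
    (hBcone : ∀ x ∈ B, ∀ t : ℝ, 0 < t → t • x ∈ B)
    (PA PB T : EuclideanSpace ℝ (Fin 2) → EuclideanSpace ℝ (Fin 2))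
    (hPA : ∀ x, PA x ∈ A ∧ ∀ w ∈ A, ‖x - PA x‖ ≤ ‖x - w‖)
    (hPB : ∀ x, PB x ∈ B ∧ ∀ w ∈ B, ‖x - PB x‖ ≤ ‖x - w‖)
    (hT : ∀ x, T x = (1 / 2 : ℝ) •
      (x + ((2 : ℝ) • PB ((2 : ℝ) • PA x - x) - ((2 : ℝ) • PA x - x))))
    (hfix : {x | T x = x} = {0}) :
    ∀ n : ℕ, ∀ x₀, T x₀ ≠ 0 → T (T^[n] x₀) ≠ T^[n] x₀ :=
  stmt19_general A B hAconv hBconv hAcone hBcone PA PB T hPA hPB hT hfix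
end
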